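/- For every t ≥ 0, the function ρ(t) = ∫₀¹ x(x−1) ∂ₜw(x,t) ∂ₓw(x,t) dx is differentiable in t and satisfies ρ′(t) = −½ ∫₀¹ (2x−1) [ (∂ₜw(x,t))² + 3(∂ₓ²w(x,t))² ] dx − (∂ₓw(1,t))². -/

import Mathlib

noncomputable def pd (v : ℝ × ℝ) (F : ℝ × ℝ → ℝ) (p : ℝ × ℝ) : ℝ := fderiv ℝ F p v

lemma contDiff_pd {n m : ℕ∞} {F : ℝ × ℝ → ℝ} (hF : ContDiff ℝ n F) (h : m + 1 ≤ n)
    (v : ℝ × ℝ) : ContDiff ℝ m (pd v F) :=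
  ((ContinuousLinearMap.apply ℝ ℝ v).contDiff).comp (hF.fderiv_right (by exact_mod_cast h))

example {F : ℝ × ℝ → ℝ} (hF : ContDiff ℝ 4 F) : ContDiff ℝ 3 (pd (1,0) F) :=
  contDiff_pd hF (by norm_num) _

example {F : ℝ × ℝ → ℝ} (hF : ContDiff ℝ 4 F) : Differentiable ℝ F :=
  hF.differentiable (by norm_num)

lemma hasDerivAt_slice1 {F : ℝ × ℝ → ℝ} (hF : Differentiable ℝ F) (x t : ℝ) :
    HasDerivAt (fun ξ => F (ξ, t)) (pd (1,0) F (x,t)) x :=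
  (hF (x,t)).hasFDerivAt.comp_hasDerivAt x ((hasDerivAt_id x).prodMk (hasDerivAt_const x t))

lemma hasDerivAt_slice2 {F : ℝ × ℝ → ℝ} (hF : Differentiable ℝ F) (x t : ℝ) :
    HasDerivAt (fun s => F (x, s)) (pd (0,1) F (x,t)) t :=
  (hF (x,t)).hasFDerivAt.comp_hasDerivAt t ((hasDerivAt_const t x).prodMk (hasDerivAt_id t))

lemma pd_comm {F : ℝ × ℝ → ℝ} (hF : ContDiff ℝ 2 F) (p u v : ℝ × ℝ) :
    pd u (pd v F) p = pd v (pd u F) p := by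
  have hd : Differentiable ℝ F := hF.differentiable two_ne_zero
  have h1 : ContDiff ℝ 1 (fderiv ℝ F) := hF.fderiv_right (by exact_mod_cast le_refl (2:ℕ∞))
  have hx : HasFDerivAt (fderiv ℝ F) (fderiv ℝ (fderiv ℝ F) p) p :=
    (h1.differentiable one_ne_zero p).hasFDerivAt
  have key := second_derivative_symmetric (fun y => (hd y).hasFDerivAt) hx u v
  have e : ∀ z : ℝ × ℝ, fderiv ℝ (pd z F) p
      = (ContinuousLinearMap.apply ℝ ℝ z).comp (fderiv ℝ (fderiv ℝ F) p) := by
    intro z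
    exact HasFDerivAt.fderiv ((ContinuousLinearMap.apply ℝ ℝ z).hasFDerivAt.comp p hx)
  show fderiv ℝ (pd v F) p u = fderiv ℝ (pd u F) p v
  rw [e, e]
  simp only [ContinuousLinearMap.coe_comp', Function.comp_apply, ContinuousLinearMap.apply_apply]
  exact key

noncomputable abbrev pdx (F : ℝ × ℝ → ℝ) : ℝ × ℝ → ℝ := pd (1,0) F
noncomputable abbrev pdt (F : ℝ × ℝ → ℝ) : ℝ × ℝ → ℝ := pd (0,1) F

section glue
variable (w : ℝ → ℝ → ℝ)

lemma deriv_slice_x (hW : Differentiable ℝ (fun p : ℝ × ℝ => w p.1 p.2)) (x t : ℝ) :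
    deriv (fun ξ => w ξ t) x = pdx (fun p : ℝ × ℝ => w p.1 p.2) (x, t) :=
  (hasDerivAt_slice1 hW x t).deriv

lemma deriv_slice_t (hW : Differentiable ℝ (fun p : ℝ × ℝ => w p.1 p.2)) (x t : ℝ) :
    deriv (fun s => w x s) t = pdt (fun p : ℝ × ℝ => w p.1 p.2) (x, t) :=
  (hasDerivAt_slice2 hW x t).deriv

lemma iteratedDeriv2_slice_x (hW : ContDiff ℝ 4 (fun p : ℝ × ℝ => w p.1 p.2)) (x t : ℝ) :
    iteratedDeriv 2 (fun ξ => w ξ t) x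
      = pdx (pdx (fun p : ℝ × ℝ => w p.1 p.2)) (x, t) := by
  have hWd : Differentiable ℝ (fun p : ℝ × ℝ => w p.1 p.2) := hW.differentiable (by norm_num)
  have h3 : ContDiff ℝ 3 (pdx (fun p : ℝ × ℝ => w p.1 p.2)) := contDiff_pd hW (by norm_num) _
  rw [show (2:ℕ) = 1+1 from rfl, iteratedDeriv_succ, iteratedDeriv_one]
  have d0 : deriv (fun ξ => w ξ t) = fun ξ => pdx (fun p : ℝ × ℝ => w p.1 p.2) (ξ, t) :=
    funext fun ξ => deriv_slice_x w hWd ξ t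
  rw [d0]
  exact (hasDerivAt_slice1 (h3.differentiable (by norm_num)) x t).deriv

lemma iteratedDeriv2_slice_t (hW : ContDiff ℝ 4 (fun p : ℝ × ℝ => w p.1 p.2)) (x t : ℝ) :
    iteratedDeriv 2 (fun τ => w x τ) t
      = pdt (pdt (fun p : ℝ × ℝ => w p.1 p.2)) (x, t) := by
  have hWd : Differentiable ℝ (fun p : ℝ × ℝ => w p.1 p.2) := hW.differentiable (by norm_num)
  have h3 : ContDiff ℝ 3 (pdt (fun p : ℝ × ℝ => w p.1 p.2)) := contDiff_pd hW (by norm_num) _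
  rw [show (2:ℕ) = 1+1 from rfl, iteratedDeriv_succ, iteratedDeriv_one]
  have d0 : deriv (fun τ => w x τ) = fun τ => pdt (fun p : ℝ × ℝ => w p.1 p.2) (x, τ) :=
    funext fun τ => deriv_slice_t w hWd x τ
  rw [d0]
  exact (hasDerivAt_slice2 (h3.differentiable (by norm_num)) x t).deriv

lemma iteratedDeriv4_slice_x (hW : ContDiff ℝ 4 (fun p : ℝ × ℝ => w p.1 p.2)) (x t : ℝ) :
    iteratedDeriv 4 (fun ξ => w ξ t) x
      = pdx (pdx (pdx (pdx (fun p : ℝ × ℝ => w p.1 p.2)))) (x, t) := by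
  have hWd : Differentiable ℝ (fun p : ℝ × ℝ => w p.1 p.2) := hW.differentiable (by norm_num)
  have h3 : ContDiff ℝ 3 (pdx (fun p : ℝ × ℝ => w p.1 p.2)) := contDiff_pd hW (by norm_num) _
  have h2 : ContDiff ℝ 2 (pdx (pdx (fun p : ℝ × ℝ => w p.1 p.2))) :=
    contDiff_pd h3 (by norm_num) _
  have h1 : ContDiff ℝ 1 (pdx (pdx (pdx (fun p : ℝ × ℝ => w p.1 p.2)))) :=
    contDiff_pd h2 (by norm_num) _
  have d0 : deriv (fun ξ => w ξ t) = fun ξ => pdx (fun p : ℝ × ℝ => w p.1 p.2) (ξ, t) :=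
    funext fun ξ => deriv_slice_x w hWd ξ t
  have d1 : deriv (fun ξ => pdx (fun p : ℝ × ℝ => w p.1 p.2) (ξ, t))
      = fun ξ => pdx (pdx (fun p : ℝ × ℝ => w p.1 p.2)) (ξ, t) :=
    funext fun ξ => (hasDerivAt_slice1 (h3.differentiable (by norm_num)) ξ t).deriv
  have d2 : deriv (fun ξ => pdx (pdx (fun p : ℝ × ℝ => w p.1 p.2)) (ξ, t))
      = fun ξ => pdx (pdx (pdx (fun p : ℝ × ℝ => w p.1 p.2))) (ξ, t) :=
    funext fun ξ => (hasDerivAt_slice1 (h2.differentiable (by norm_num)) ξ t).deriv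
  rw [show (4:ℕ) = 1+1+1+1 from rfl, iteratedDeriv_succ, iteratedDeriv_succ,
    iteratedDeriv_succ, iteratedDeriv_one, d0, d1, d2]
  exact (hasDerivAt_slice1 (h1.differentiable one_ne_zero) x t).deriv

end glue

open MeasureTheory intervalIntegral in
theorem beam_aux (W : ℝ × ℝ → ℝ) (hW : ContDiff ℝ 4 W) (t₀ : ℝ)
    (heqW : ∀ x ∈ Set.Icc (0:ℝ) 1,
      pdt (pdt W) (x, t₀) + pdx (pdx (pdx (pdx W))) (x, t₀) = 0)
    (hbc1 : pdx W (0, t₀) = 0)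
    (hbc2 : pdx (pdx W) (1, t₀) = 0) :
    HasDerivAt
      (fun τ => ∫ x in (0:ℝ)..1, x * (x - 1) * pdt W (x, τ) * pdx W (x, τ))
      (-(1/2) * (∫ x in (0:ℝ)..1,
          (2 * x - 1) * ((pdt W (x, t₀)) ^ 2 + 3 * (pdx (pdx W) (x, t₀)) ^ 2))
        - (pdx W (1, t₀)) ^ 2) t₀ := by
  -- smoothness tower
  have hx3 : ContDiff ℝ 3 (pdx W) := contDiff_pd hW (by norm_num) _
  have hxx2 : ContDiff ℝ 2 (pdx (pdx W)) := contDiff_pd hx3 (by norm_num) _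
  have hxxx1 : ContDiff ℝ 1 (pdx (pdx (pdx W))) := contDiff_pd hxx2 (by norm_num) _
  have hxxxx0 : ContDiff ℝ 0 (pdx (pdx (pdx (pdx W)))) := contDiff_pd hxxx1 (by norm_num) _
  have ht3 : ContDiff ℝ 3 (pdt W) := contDiff_pd hW (by norm_num) _
  have htt2 : ContDiff ℝ 2 (pdt (pdt W)) := contDiff_pd ht3 (by norm_num) _
  have hxt2 : ContDiff ℝ 2 (pdt (pdx W)) := contDiff_pd hx3 (by norm_num) _
  have htx2 : ContDiff ℝ 2 (pdx (pdt W)) := contDiff_pd ht3 (by norm_num) _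
  have cWx : Continuous (pdx W) := hx3.continuous
  have cWxx : Continuous (pdx (pdx W)) := hxx2.continuous
  have cWxxx : Continuous (pdx (pdx (pdx W))) := hxxx1.continuous
  have cWxxxx : Continuous (pdx (pdx (pdx (pdx W)))) := hxxxx0.continuous
  have cWt : Continuous (pdt W) := ht3.continuous
  have cWtt : Continuous (pdt (pdt W)) := htt2.continuous
  have cWxt : Continuous (pdt (pdx W)) := hxt2.continuous
  have cWtx : Continuous (pdx (pdt W)) := htx2.continuous
  -- Step A : differentiation under the integral sign
  set F' : ℝ → ℝ → ℝ := fun τ x =>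
    x * (x - 1) * pdt (pdt W) (x, τ) * pdx W (x, τ)
      + x * (x - 1) * pdt W (x, τ) * pdt (pdx W) (x, τ) with hF'def
  have h_diff : ∀ (x τ : ℝ),
      HasDerivAt (fun τ => x * (x - 1) * pdt W (x, τ) * pdx W (x, τ)) (F' τ x) τ := by
    intro x τ
    have h1 := hasDerivAt_slice2 (ht3.differentiable (by norm_num)) x τ
    have h2 := hasDerivAt_slice2 (hx3.differentiable (by norm_num)) x τ
    have := (h1.const_mul (x * (x - 1))).mul h2
    convert this using 1
    all_goals rfl
  have cid : Continuous (fun x : ℝ => (x, t₀)) := continuous_id.prodMk continuous_const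
  have cidτ : ∀ τ : ℝ, Continuous (fun x : ℝ => (x, τ)) :=
    fun τ => continuous_id.prodMk continuous_const
  have cpoly : Continuous (fun x : ℝ => x * (x - 1)) :=
    continuous_id.mul (continuous_id.sub continuous_const)
  have cslice : ∀ τ : ℝ, Continuous (fun x => x * (x - 1) * pdt W (x, τ) * pdx W (x, τ)) :=
    fun τ => (cpoly.mul (cWt.comp (cidτ τ))).mul (cWx.comp (cidτ τ))
  have cF' : ∀ τ : ℝ, Continuous (fun x => F' τ x) := by
    intro τ
    simp only [hF'def]
    exact ((cpoly.mul (cWtt.comp (cidτ τ))).mul (cWx.comp (cidτ τ))).add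
      ((cpoly.mul (cWt.comp (cidτ τ))).mul (cWxt.comp (cidτ τ)))
  have cK : Continuous (fun p : ℝ × ℝ => F' p.2 p.1) := by
    simp only [hF'def]
    have cpair : Continuous (fun p : ℝ × ℝ => (p.1, p.2)) := continuous_fst.prodMk continuous_snd
    have cpoly2 : Continuous (fun p : ℝ × ℝ => p.1 * (p.1 - 1)) :=
      continuous_fst.mul (continuous_fst.sub continuous_const)
    exact ((cpoly2.mul (cWtt.comp cpair)).mul (cWx.comp cpair)).add
      ((cpoly2.mul (cWt.comp cpair)).mul (cWxt.comp cpair))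
  obtain ⟨C, hC⟩ := (IsCompact.exists_bound_of_continuousOn
    ((isCompact_Icc (a := (0:ℝ)) (b := 1)).prod
      (isCompact_Icc (a := t₀ - 1) (b := t₀ + 1))) cK.continuousOn)
  have h_bound : ∀ x ∈ Set.uIoc (0:ℝ) 1, ∀ τ ∈ Metric.ball t₀ 1, ‖F' τ x‖ ≤ C := by
    intro x hx τ hτ
    have hx' : x ∈ Set.Icc (0:ℝ) 1 := by
      rw [Set.uIoc_of_le (by norm_num : (0:ℝ) ≤ 1)] at hx
      exact ⟨hx.1.le, hx.2⟩
    have hτ' : τ ∈ Set.Icc (t₀ - 1) (t₀ + 1) := by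
      rw [Metric.mem_ball, Real.dist_eq, abs_sub_lt_iff] at hτ
      constructor <;> linarith [hτ.1, hτ.2]
    exact hC (x, τ) ⟨hx', hτ'⟩
  have main := intervalIntegral.hasDerivAt_integral_of_dominated_loc_of_deriv_le
    (F := fun τ x => x * (x - 1) * pdt W (x, τ) * pdx W (x, τ)) (F' := F')
    (x₀ := t₀) (a := 0) (b := 1) (bound := fun _ => C) (s := Metric.ball t₀ 1) (μ := MeasureTheory.volume) (Metric.ball_mem_nhds t₀ one_pos)
    (Filter.Eventually.of_forall fun τ => ((cslice τ).aestronglyMeasurable))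
    ((cslice t₀).intervalIntegrable 0 1)
    ((cF' t₀).aestronglyMeasurable)
    (Filter.Eventually.of_forall h_bound)
    (intervalIntegrable_const)
    (Filter.Eventually.of_forall fun x _ τ _ => h_diff x τ)
  have hD := main.2
  -- Step B: evaluate the derivative integral via an explicit antiderivative
  have hsymm : ∀ x : ℝ, pdt (pdx W) (x, t₀) = pdx (pdt W) (x, t₀) :=
    fun x => pd_comm (hW.of_le (by norm_num)) (x, t₀) (0, 1) (1, 0)
  set H : ℝ → ℝ := fun x =>
    -(x * (x - 1)) * pdx (pdx (pdx W)) (x, t₀) * pdx W (x, t₀)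
      + (2 * x - 1) * pdx W (x, t₀) * pdx (pdx W) (x, t₀)
      - (pdx W (x, t₀)) ^ 2
      + 1/2 * (x * (x - 1)) * (pdx (pdx W) (x, t₀)) ^ 2
      + 1/2 * (x * (x - 1)) * (pdt W (x, t₀)) ^ 2 with hHdef
  set g : ℝ → ℝ := fun x =>
    x * (x - 1) * (-(pdx (pdx (pdx (pdx W))) (x, t₀)) * pdx W (x, t₀)
        + pdt W (x, t₀) * pdx (pdt W) (x, t₀))
      + (3/2) * (2 * x - 1) * (pdx (pdx W) (x, t₀)) ^ 2
      + 1/2 * (2 * x - 1) * (pdt W (x, t₀)) ^ 2 with hgdef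
  have hH : ∀ x : ℝ, HasDerivAt H (g x) x := by
    intro x
    have hu := hasDerivAt_slice1 (hx3.differentiable (by norm_num)) x t₀
    have hu' := hasDerivAt_slice1 (hxx2.differentiable (by norm_num)) x t₀
    have hu'' := hasDerivAt_slice1 (hxxx1.differentiable one_ne_zero) x t₀
    have hwt := hasDerivAt_slice1 (ht3.differentiable (by norm_num)) x t₀
    have hid : HasDerivAt (fun y : ℝ => y) 1 x := hasDerivAt_id x
    have ha : HasDerivAt (fun y : ℝ => y * (y - 1)) (1 * (x - 1) + x * 1) x :=
      hid.mul (hid.sub_const 1)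
    have h2 : HasDerivAt (fun y : ℝ => 2 * y - 1) (2 * 1) x := (hid.const_mul 2).sub_const 1
    have hpoly : HasDerivAt (fun y : ℝ => 1/2 * (y * (y - 1)))
        (1/2 * (1 * (x - 1) + x * 1)) x := ha.const_mul (1/2)
    have T := ((((((ha.neg.mul hu'').mul hu).add ((h2.mul hu).mul hu')).sub (hu.pow 2)).add
      (hpoly.mul (hu'.pow 2))).add (hpoly.mul (hwt.pow 2)))
    simp only [hHdef, hgdef]
    refine T.congr_deriv ?_
    simp only [pdx, pdt]
    push_cast
    simp only [Pi.mul_apply, Pi.pow_apply, Pi.neg_apply]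
    ring
  have c2x1 : Continuous (fun x : ℝ => 2 * x - 1) :=
    (continuous_const.mul continuous_id).sub continuous_const
  have hgc : Continuous g := by
    simp only [hgdef]
    exact ((cpoly.mul (((cWxxxx.comp cid).neg.mul (cWx.comp cid)).add
        ((cWt.comp cid).mul (cWtx.comp cid)))).add
      ((continuous_const.mul c2x1).mul ((cWxx.comp cid).pow 2))).add
      ((continuous_const.mul c2x1).mul ((cWt.comp cid).pow 2))
  have hFTC : ∫ x in (0:ℝ)..1, g x = H 1 - H 0 :=
    intervalIntegral.integral_eq_sub_of_hasDerivAt (fun x _ => hH x)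
      (hgc.intervalIntegrable 0 1)
  have hψc : Continuous (fun x : ℝ =>
      (2 * x - 1) * ((pdt W (x, t₀)) ^ 2 + 3 * (pdx (pdx W) (x, t₀)) ^ 2)) :=
    c2x1.mul (((cWt.comp cid).pow 2).add (continuous_const.mul ((cWxx.comp cid).pow 2)))
  have heq2 : Set.EqOn (F' t₀) (fun x => g x - 1/2 *
      ((2 * x - 1) * ((pdt W (x, t₀)) ^ 2 + 3 * (pdx (pdx W) (x, t₀)) ^ 2)))
      (Set.uIcc (0:ℝ) 1) := by
    intro x hx
    rw [Set.uIcc_of_le (by norm_num : (0:ℝ) ≤ 1)] at hx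
    have hpde := heqW x hx
    have htt : pdt (pdt W) (x, t₀) = -(pdx (pdx (pdx (pdx W))) (x, t₀)) := by linarith
    simp only [hF'def, hgdef]
    rw [htt, hsymm x]
    ring
  have e2 : ∫ x in (0:ℝ)..1, F' t₀ x = (∫ x in (0:ℝ)..1, g x)
      - 1/2 * ∫ x in (0:ℝ)..1,
        (2 * x - 1) * ((pdt W (x, t₀)) ^ 2 + 3 * (pdx (pdx W) (x, t₀)) ^ 2) := by
    rw [intervalIntegral.integral_congr heq2,
      intervalIntegral.integral_sub (hgc.intervalIntegrable 0 1)
        (Continuous.intervalIntegrable (u := fun x : ℝ => 1/2 *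
          ((2 * x - 1) * ((pdt W (x, t₀)) ^ 2 + 3 * (pdx (pdx W) (x, t₀)) ^ 2))) (continuous_const.mul hψc) 0 1),
      intervalIntegral.integral_const_mul]
  have eH1 : H 1 = -(pdx W (1, t₀)) ^ 2 := by
    simp only [hHdef]
    rw [hbc2]
    ring
  have eH0 : H 0 = 0 := by
    simp only [hHdef]
    rw [hbc1]
    ring
  rw [e2, hFTC, eH1, eH0] at hD
  refine hD.congr_deriv ?_
  ring


open Real MeasureTheory intervalIntegral

/-- For a C⁴ solution `w` of the Euler–Bernoulli beam equation on `[0,1]` with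
boundary conditions `w(0,t) = wₓ(0,t) = wₓₓ(1,t) = 0`, the multiplier
`ρ(t) = ∫₀¹ x(x−1) wₜ(x,t) wₓ(x,t) dx` is differentiable with
`ρ′(t) = −½∫₀¹ (2x−1)(wₜ² + 3 wₓₓ²) dx − wₓ(1,t)²`. -/
theorem euler_bernoulli_multiplier_derivative
    (w : ℝ → ℝ → ℝ)
    (hw : ContDiff ℝ 4 (fun p : ℝ × ℝ => w p.1 p.2))
    (heq : ∀ x ∈ Set.Icc (0:ℝ) 1, ∀ t ≥ (0:ℝ),
      iteratedDeriv 2 (fun τ => w x τ) t + iteratedDeriv 4 (fun ξ => w ξ t) x = 0)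
    (hbc : ∀ t ≥ (0:ℝ),
      w 0 t = 0 ∧ deriv (fun ξ => w ξ t) 0 = 0 ∧
      iteratedDeriv 2 (fun ξ => w ξ t) 1 = 0) :
    ∀ t ≥ (0:ℝ),
      HasDerivAt
        (fun τ => ∫ x in (0:ℝ)..1,
          x * (x - 1) * deriv (fun s => w x s) τ * deriv (fun ξ => w ξ τ) x)
        (-(1/2) * (∫ x in (0:ℝ)..1,
            (2 * x - 1) * ((deriv (fun s => w x s) t) ^ 2
              + 3 * (iteratedDeriv 2 (fun ξ => w ξ t) x) ^ 2))
          - (deriv (fun ξ => w ξ t) 1) ^ 2) t := by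
  intro t ht
  have hWd : Differentiable ℝ (fun p : ℝ × ℝ => w p.1 p.2) := hw.differentiable (by norm_num)
  have heqW : ∀ x ∈ Set.Icc (0:ℝ) 1,
      pdt (pdt (fun p : ℝ × ℝ => w p.1 p.2)) (x, t)
        + pdx (pdx (pdx (pdx (fun p : ℝ × ℝ => w p.1 p.2)))) (x, t) = 0 := by
    intro x hx
    have h := heq x hx t ht
    rwa [iteratedDeriv2_slice_t w hw x t, iteratedDeriv4_slice_x w hw x t] at h
  have hbc1 : pdx (fun p : ℝ × ℝ => w p.1 p.2) (0, t) = 0 :=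
    (deriv_slice_x w hWd 0 t).symm.trans (hbc t ht).2.1
  have hbc2 : pdx (pdx (fun p : ℝ × ℝ => w p.1 p.2)) (1, t) = 0 :=
    (iteratedDeriv2_slice_x w hw 1 t).symm.trans (hbc t ht).2.2
  have main := beam_aux (fun p : ℝ × ℝ => w p.1 p.2) hw t heqW hbc1 hbc2
  simp only [deriv_slice_t w hWd, deriv_slice_x w hWd, iteratedDeriv2_slice_x w hw]
  exact main
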